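/- arXiv:1808.01430 — 5 statements merged into one kernel-verified Lean document; each statement's English description precedes it below -/
import Mathlib

section
/- Let k, r be positive integers and i an integer with 1 ≤ i ≤ r < k. Then in 𝓘 one has F(k,r,i) − (Σ_{l=1}^{k−r−1} 2^{l−1} G1((1^{i−1}, l+1, 1^{r−i}), k−r−l) + G1((1^r), k−r)) = 2^{k−r−1}·(1^{i−1}, k−r+1, 1^{r−i}). -/
/-- The ℚ-vector space 𝓘 spanned by the indices: finitely supported ℚ-valued functions
on lists of positive integers (an index `k` is identified with the basis element
`Finsupp.single k 1`; all elements occurring below are supported on lists of positive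
integers). -/
abbrev IndexSpace : Type := List ℕ →₀ ℚ

/-- The set of "cut points" of an index `k = (k₁,…,k_r)`: its proper partial sums
`{k₁, k₁+k₂, …, k₁+⋯+k_{r-1}}`.  An index of weight `w` is determined by its cut set,
a subset of `{1,…,w-1}`. -/
def cuts (k : List ℕ) : Finset ℕ := (((k.scanl (· + ·) 0).drop 1).dropLast).toFinset

/-- The composition (index) of `w` determined by a set `S ⊆ {1,…,w-1}` of cut points:
if `S = {s₁ < ⋯ < s_m}` this is `(s₁, s₂ - s₁, …, w - s_m)`. -/
def compOfCuts (w : ℕ) (S : Finset ℕ) : List ℕ :=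
  List.zipWith (· - ·) (S.sort (· ≤ ·) ++ [w]) (0 :: S.sort (· ≤ ·))

/-- Hoffman's dual `k^∨` of an index `k`: the index of the same weight whose cut set is
the complement of that of `k` (i.e. exchange all commas and pluses in `k = 1□1□⋯□1`). -/
def hdual (k : List ℕ) : List ℕ := compOfCuts k.sum (Finset.Ico 1 k.sum \ cuts k)

/-- `φ(k) = (-1)^{dep(k)} ∑ (1□1□⋯□1, … , 1□⋯□1)`, the sum over all `2^{wt(k)-dep(k)}`
ways of choosing each within-block box of `k` to be a comma or a plus; equivalently the
sum of `Finsupp.single k' 1` over all indices `k'` whose cut set contains that of `k`. -/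
noncomputable def phi (k : List ℕ) : IndexSpace :=
  ((-1 : ℚ) ^ k.length) •
    ∑ S ∈ (Finset.Ico 1 k.sum \ cuts k).powerset,
      Finsupp.single (compOfCuts k.sum (cuts k ∪ S)) (1 : ℚ)

/-- The ℚ-linear extension of `φ` to 𝓘. -/
noncomputable def phiL (x : IndexSpace) : IndexSpace := x.sum fun k c => c • phi k

/-- Componentwise sum `k ⊕ e` of two sequences of the same length. -/
def oplus (k e : List ℕ) : List ℕ := List.zipWith (· + ·) k e

/-- `G₁(k,l) = ∑_{wt(e)=l, dep(e)=dep(k)} (k ⊕ e)`, the sum over sequences `e` of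
nonnegative integers of weight `l` and length `dep(k)`. -/
noncomputable def G1 (k : List ℕ) (l : ℕ) : IndexSpace :=
  ∑ e ∈ Finset.Nat.antidiagonalTuple k.length l,
    Finsupp.single (oplus k (List.ofFn e)) (1 : ℚ)

/-- `G₂(k,l) = ∑_{wt(e)=l, dep(e)=dep(k^∨)} (k^∨ ⊕ e)^∨`. -/
noncomputable def G2 (k : List ℕ) (l : ℕ) : IndexSpace :=
  ∑ e ∈ Finset.Nat.antidiagonalTuple (hdual k).length l,
    Finsupp.single (hdual (oplus (hdual k) (List.ofFn e))) (1 : ℚ)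

/-- `G(k,l) = G₁(k,l) - G₂(k,l)`. -/
noncomputable def G (k : List ℕ) (l : ℕ) : IndexSpace := G1 k l - G2 k l

/-- `F(k,r,i) = ∑_{k₁+⋯+k_r = k, kⱼ ≥ 1} 2^{k_i - 1} · (k₁,…,k_r)` (here `i` is 1-based,
with `1 ≤ i ≤ r`). -/
noncomputable def F (k r i : ℕ) : IndexSpace :=
  ∑ ks ∈ (Finset.Nat.antidiagonalTuple r k).filter (fun ks => ∀ j, 1 ≤ ks j),
    Finsupp.single (List.ofFn ks) ((2 : ℚ) ^ ((List.ofFn ks).getD (i - 1) 0 - 1))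

/-- The index `(1^{i-1}, v, 1^{r-i})` (here `i` is 1-based, with `1 ≤ i ≤ r`). -/
def midIdx (r i v : ℕ) : List ℕ :=
  List.replicate (i - 1) 1 ++ v :: List.replicate (r - i) 1

/-- `H(k,r,i) = F(k,r,i) - (∑_{l=1}^{k-r-1} 2^{l-1} G((1^{i-1}, l+1, 1^{r-i}), k-r-l)
+ G((1^r), k-r))`. -/
noncomputable def H (k r i : ℕ) : IndexSpace :=
  F k r i -
    ((∑ l ∈ Finset.Icc 1 (k - r - 1),
        (2 : ℚ) ^ (l - 1) • G (midIdx r i (l + 1)) (k - r - l)) +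
      G (List.replicate r 1) (k - r))


/-!
Every term on the left is a combination of the compositions `ks` of `k` into `r` positive parts:
`G1((1^{i-1}, l+1, 1^{r-i}), k-r-l)` is the sum of those with `ks_i ≥ l+1`, and `G1((1^r), k-r)`
the sum of all of them. Hence a composition with `ks_i = a` has coefficient
`2^{a-1} - ∑_{l < a, l ≤ k-r-1} 2^{l-1} - 1`, which by the geometric sum vanishes for `a ≤ k-r`
and is `2^{k-r-1}` for the largest possible value `a = k-r+1`, attained only by
`(1^{i-1}, k-r+1, 1^{r-i})`.
-/

open Finset Function

def compositions (r k : ℕ) : Finset (Fin r → ℕ) :=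
  (Nat.antidiagonalTuple r k).filter (fun ks => ∀ j, 1 ≤ ks j)

lemma mem_compositions {r k : ℕ} {ks : Fin r → ℕ} :
    ks ∈ compositions r k ↔ ∑ j, ks j = k ∧ 1 ≤ ks := by
  rw [compositions, mem_filter, Nat.mem_antidiagonalTuple]
  rfl

lemma midIdx_succ {r : ℕ} (i₀ : Fin r) (v : ℕ) :
    midIdx r (i₀ + 1) v = List.ofFn (update 1 i₀ v) := by
  have := i₀.isLt
  apply List.ext_getElem
  · simp only [midIdx, List.length_append, List.length_replicate, List.length_cons,
      List.length_ofFn]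
    omega
  · intro n hn _
    simp only [midIdx, List.getElem_ofFn, update_apply, List.getElem_append,
      List.length_replicate, List.getElem_replicate, List.getElem_cons, Fin.ext_iff, Pi.one_apply]
    split_ifs <;> omega

lemma sum_update_one {r : ℕ} (i₀ : Fin r) (v : ℕ) :
    ∑ j, update (1 : Fin r → ℕ) i₀ v j = r - 1 + v := by
  simp [sum_update_of_mem (mem_univ i₀), add_comm, card_sdiff]

lemma G1_ofFn {n : ℕ} (f : Fin n → ℕ) (l : ℕ) :
    G1 (List.ofFn f) l =
      ∑ e ∈ Nat.antidiagonalTuple n l, Finsupp.single (List.ofFn (f + e)) (1 : ℚ) := by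
  rw [G1]
  refine sum_equiv ((finCongr List.length_ofFn).arrowCongr (.refl ℕ)) (fun e => ?_) fun e _ => ?_
  · simp only [Nat.mem_antidiagonalTuple]
    rw [← Equiv.sum_comp (finCongr List.length_ofFn).symm]
    rfl
  · congr 1
    apply List.ext_getElem <;> simp [oplus]

lemma G1_ofFn_eq_sum_ge {n : ℕ} (f : Fin n → ℕ) (l : ℕ) :
    G1 (List.ofFn f) l =
      ∑ ks ∈ (Nat.antidiagonalTuple n (∑ j, f j + l)).filter (fun ks => ∀ j, f j ≤ ks j),
        Finsupp.single (List.ofFn ks) (1 : ℚ) := by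
  rw [G1_ofFn]
  refine sum_nbij' (f + ·) (· - f) ?_ ?_ ?_ ?_ ?_
  · intro e he
    simp_all [Nat.mem_antidiagonalTuple, sum_add_distrib]
  · intro ks hks
    rw [mem_filter, Nat.mem_antidiagonalTuple] at hks
    rw [Nat.mem_antidiagonalTuple]
    have : ∑ j, (ks j - f j + f j) = ∑ j, ks j :=
      sum_congr rfl fun j _ => tsub_add_cancel_of_le (hks.2 j)
    rw [sum_add_distrib, hks.1] at this
    simp only [Pi.sub_apply]
    omega
  · intro e _
    exact add_tsub_cancel_left f e
  · intro ks hks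
    exact add_tsub_cancel_of_le (mem_filter.1 hks).2
  · intro _ _
    rfl

lemma G1_update_one {r : ℕ} (i₀ : Fin r) {k l : ℕ} (h : r + l ≤ k) :
    G1 (List.ofFn (update 1 i₀ (l + 1))) (k - r - l) =
      ∑ ks ∈ (compositions r k).filter (fun ks => l + 1 ≤ ks i₀),
        Finsupp.single (List.ofFn ks) (1 : ℚ) := by
  have := i₀.isLt
  rw [G1_ofFn_eq_sum_ge, sum_update_one, show r - 1 + (l + 1) + (k - r - l) = k by omega,
    compositions, filter_filter]
  refine sum_congr (filter_congr fun ks _ => ?_) fun _ _ => rfl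
  change update (1 : Fin r → ℕ) i₀ (l + 1) ≤ ks ↔ _
  rw [update_le_iff]
  constructor
  · rintro ⟨hi₀, hj⟩
    refine ⟨fun j => ?_, hi₀⟩
    rcases eq_or_ne j i₀ with rfl | hj₀
    · omega
    · exact hj j hj₀
  · rintro ⟨hj, hi₀⟩
    exact ⟨hi₀, fun j _ => hj j⟩

lemma update_one_le_of_mem_compositions {r k : ℕ} {ks : Fin r → ℕ}
    (hks : ks ∈ compositions r k) (i₀ : Fin r) :
    update (1 : Fin r → ℕ) i₀ (ks i₀) ≤ ks :=
  update_le_iff.2 ⟨le_rfl, fun j _ => (mem_compositions.1 hks).2 j⟩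

lemma le_of_mem_compositions {r k : ℕ} {ks : Fin r → ℕ} (hks : ks ∈ compositions r k)
    (i₀ : Fin r) : r - 1 + ks i₀ ≤ k := by
  rw [← sum_update_one i₀, ← (mem_compositions.1 hks).1]
  exact sum_le_sum fun j _ => update_one_le_of_mem_compositions hks i₀ j

lemma eq_update_one_iff_of_mem_compositions {r k : ℕ} {ks : Fin r → ℕ}
    (hks : ks ∈ compositions r k) (i₀ : Fin r) :
    ks = update (1 : Fin r → ℕ) i₀ (k - r + 1) ↔ ks i₀ = k - r + 1 := by
  refine ⟨fun h => by rw [h, update_self], fun h => ?_⟩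
  have hle := update_one_le_of_mem_compositions hks i₀
  have hsum : ∑ j, update (1 : Fin r → ℕ) i₀ (ks i₀) j = ∑ j, ks j := by
    have := le_of_mem_compositions hks i₀
    rw [sum_update_one, (mem_compositions.1 hks).1]
    omega
  rw [← h]
  exact funext fun j => ((sum_eq_sum_iff_of_le fun j _ => hle j).1 hsum j (mem_univ j)).symm

lemma update_one_mem_compositions {r k : ℕ} (i₀ : Fin r) (h : r ≤ k) :
    update (1 : Fin r → ℕ) i₀ (k - r + 1) ∈ compositions r k :=
  mem_compositions.2 ⟨by have := i₀.isLt; rw [sum_update_one]; omega,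
    le_update_iff.2 ⟨Nat.le_add_left 1 _, fun _ _ => le_rfl⟩⟩

noncomputable def compositionSum (r k : ℕ) : ((Fin r → ℕ) → ℚ) →ₗ[ℚ] IndexSpace :=
  ∑ ks ∈ compositions r k, (LinearMap.proj ks).smulRight (Finsupp.single (List.ofFn ks) 1)

lemma compositionSum_apply (r k : ℕ) (c : (Fin r → ℕ) → ℚ) :
    compositionSum r k c =
      ∑ ks ∈ compositions r k, c ks • Finsupp.single (List.ofFn ks) 1 := by
  simp [compositionSum]

lemma compositionSum_congr {r k : ℕ} {c c' : (Fin r → ℕ) → ℚ}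
    (h : ∀ ks ∈ compositions r k, c ks = c' ks) :
    compositionSum r k c = compositionSum r k c' := by
  simp only [compositionSum_apply]
  exact sum_congr rfl fun ks hks => by rw [h ks hks]

lemma compositionSum_pi_single {r k : ℕ} {m : Fin r → ℕ} (hm : m ∈ compositions r k)
    (a : ℚ) :
    compositionSum r k (Pi.single m a) = a • Finsupp.single (List.ofFn m) 1 := by
  simp [compositionSum_apply, Pi.single_apply, ite_smul, hm]

lemma G1_midIdx_eq_compositionSum {r : ℕ} (i₀ : Fin r) {k l : ℕ} (h : r + l ≤ k) :
    G1 (midIdx r (i₀ + 1) (l + 1)) (k - r - l) =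
      compositionSum r k (fun ks => if l + 1 ≤ ks i₀ then 1 else 0) := by
  simp [midIdx_succ, G1_update_one i₀ h, compositionSum_apply, ite_smul, sum_filter]

lemma replicate_one_eq_midIdx {r : ℕ} (i₀ : Fin r) :
    List.replicate r 1 = midIdx r (i₀ + 1) 1 := by
  rw [midIdx_succ, show update (1 : Fin r → ℕ) i₀ 1 = 1 from update_eq_self_iff.2 rfl]
  exact (List.ofFn_const r 1).symm

lemma F_eq_compositionSum (k : ℕ) {r : ℕ} (i₀ : Fin r) :
    F k r (i₀ + 1) = compositionSum r k (fun ks => 2 ^ (ks i₀ - 1)) := by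
  rw [compositionSum_apply, F]
  refine sum_congr rfl fun ks _ => ?_
  simp

lemma sum_Icc_two_pow_pred (b : ℕ) : ∑ l ∈ Icc 1 b, (2 : ℚ) ^ (l - 1) = 2 ^ b - 1 := by
  induction b with
  | zero => simp
  | succ b ih =>
    rw [sum_Icc_succ_top (by omega), ih, Nat.add_sub_cancel, pow_succ]
    ring

lemma two_pow_pred_sub_sum_Icc_ite {B a : ℕ} (hB : 1 ≤ B) (ha : 1 ≤ a) (haB : a ≤ B + 1) :
    (2 : ℚ) ^ (a - 1) -
        ((∑ l ∈ Icc 1 (B - 1), if l + 1 ≤ a then (2 : ℚ) ^ (l - 1) else 0) + 1) =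
      if a = B + 1 then 2 ^ (B - 1) else 0 := by
  obtain ⟨B, rfl⟩ : ∃ b, B = b + 1 := ⟨B - 1, by omega⟩
  have hfilter : (Icc 1 B).filter (· + 1 ≤ a) = Icc 1 (min (a - 1) B) := by
    ext l
    simp only [mem_filter, mem_Icc]
    omega
  rw [← sum_filter, Nat.add_sub_cancel, hfilter, sum_Icc_two_pow_pred]
  split_ifs with h
  · rw [h, min_eq_right (by omega), Nat.add_sub_cancel, pow_succ]
    ring
  · rw [min_eq_left (by omega)]
    ring

theorem lemma_one_general (k r i : ℕ) (hi : 1 ≤ i) (hir : i ≤ r) (hrk : r < k) :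
    F k r i -
        ((∑ l ∈ Finset.Icc 1 (k - r - 1),
            (2 : ℚ) ^ (l - 1) • G1 (midIdx r i (l + 1)) (k - r - l)) +
          G1 (List.replicate r 1) (k - r)) =
      (2 : ℚ) ^ (k - r - 1) • Finsupp.single (midIdx r i (k - r + 1)) (1 : ℚ) := by
  obtain ⟨i₀, rfl⟩ : ∃ i₀ : Fin r, i = i₀ + 1 :=
    ⟨⟨i - 1, by omega⟩, (Nat.sub_add_cancel hi).symm⟩
  set ind : ℕ → (Fin r → ℕ) → ℚ := fun l ks => if l + 1 ≤ ks i₀ then 1 else 0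
  have hsum :
      ∑ l ∈ Icc 1 (k - r - 1),
          (2 : ℚ) ^ (l - 1) • G1 (midIdx r (i₀ + 1) (l + 1)) (k - r - l) =
        compositionSum r k (∑ l ∈ Icc 1 (k - r - 1), (2 : ℚ) ^ (l - 1) • ind l) := by
    rw [map_sum]
    refine sum_congr rfl fun l hl => ?_
    rw [map_smul, G1_midIdx_eq_compositionSum i₀ (by simp only [mem_Icc] at hl; omega)]
  have hrep : G1 (List.replicate r 1) (k - r) = compositionSum r k (ind 0) := by
    simpa [← replicate_one_eq_midIdx] using G1_midIdx_eq_compositionSum i₀ (l := 0) hrk.le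
  rw [F_eq_compositionSum, hsum, hrep, midIdx_succ,
    ← compositionSum_pi_single (update_one_mem_compositions i₀ hrk.le), ← map_add,
    ← map_sub]
  refine compositionSum_congr fun ks hks => ?_
  have hpos : 1 ≤ ks i₀ := (mem_compositions.1 hks).2 i₀
  have hle := le_of_mem_compositions hks i₀
  simp only [ind, Pi.sub_apply, Pi.add_apply, Finset.sum_apply, Pi.smul_apply, smul_eq_mul,
    mul_ite, mul_one, mul_zero, zero_add, if_pos hpos, Pi.single_apply,
    eq_update_one_iff_of_mem_compositions hks]
  exact two_pow_pred_sub_sum_Icc_ite (by omega) hpos (by omega)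

/-- **Lemma 1**.  For positive integers `k, r` and `1 ≤ i ≤ r < k`, in 𝓘 one has
`F(k,r,i) - (∑_{l=1}^{k-r-1} 2^{l-1} G₁((1^{i-1}, l+1, 1^{r-i}), k-r-l) + G₁((1^r), k-r))
= 2^{k-r-1} · (1^{i-1}, k-r+1, 1^{r-i})`. -/
theorem lemma_one (k r i : ℕ) (hk : 0 < k) (hr : 0 < r) (hi : 1 ≤ i) (hir : i ≤ r)
    (hrk : r < k) :
    F k r i -
        ((∑ l ∈ Finset.Icc 1 (k - r - 1),
            (2 : ℚ) ^ (l - 1) • G1 (midIdx r i (l + 1)) (k - r - l)) +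
          G1 (List.replicate r 1) (k - r)) =
      (2 : ℚ) ^ (k - r - 1) • Finsupp.single (midIdx r i (k - r + 1)) (1 : ℚ) :=
  lemma_one_general k r i hi hir hrk
end

section
/- (Antipode relation) For any positive integers k1,…,kr, for all but finitely many primes p one has Σ_{l=0}^{r} (−1)^l · Z*_p(k1,…,kl) · Z_p(kr,…,k_{l+1}) = 0 in ℤ/pℤ, where the l = 0 term is Z_p(kr,…,k1) and the l = r term is (−1)^r Z*_p(k1,…,kr). Equivalently, Σ_{l=0}^{r} (−1)^l ζ*_𝒜(k1,…,kl) ζ_𝒜(kr,…,k_{l+1}) = 0. -/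
/-- Truncated multiple harmonic sum
`Z_p(k₁,…,k_r) = ∑_{0 < n₁ < ⋯ < n_r < p} 1/(n₁^{k₁} ⋯ n_r^{k_r})` in `ZMod p`,
with the index given as a tuple `k : Fin r → ℕ`.  (For `r = 0` the value is `1`.) -/
def Zfin (p : ℕ) {r : ℕ} (k : Fin r → ℕ) : ZMod p :=
  ∑ n ∈ Finset.univ.filter
      (fun n : Fin r → Fin p =>
        (∀ j1 j2 : Fin r, j1 < j2 → n j1 < n j2) ∧ ∀ j : Fin r, 0 < (n j : ℕ)),
    ∏ j : Fin r, (((n j : ℕ) : ZMod p))⁻¹ ^ k j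

/-- Truncated multiple harmonic star sum
`Z*_p(k₁,…,k_r) = ∑_{0 < n₁ ≤ ⋯ ≤ n_r < p} 1/(n₁^{k₁} ⋯ n_r^{k_r})` in `ZMod p`. -/
def ZSfin (p : ℕ) {r : ℕ} (k : Fin r → ℕ) : ZMod p :=
  ∑ n ∈ Finset.univ.filter
      (fun n : Fin r → Fin p =>
        (∀ j1 j2 : Fin r, j1 < j2 → n j1 ≤ n j2) ∧ ∀ j : Fin r, 0 < (n j : ℕ)),
    ∏ j : Fin r, (((n j : ℕ) : ZMod p))⁻¹ ^ k j

/-- `Z_p` on an index given as a list. -/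
def ZL (p : ℕ) (k : List ℕ) : ZMod p := Zfin p k.get

/-- `Z*_p` on an index given as a list. -/
def ZSL (p : ℕ) (k : List ℕ) : ZMod p := ZSfin p k.get

namespace AntipodeAux

/-- The summand appearing in all the truncated sums. -/
def pprod (p : ℕ) {n : ℕ} (w : Fin n → ℕ) (f : Fin n → Fin p) : ZMod p :=
  ∏ j, (((f j : ℕ) : ZMod p))⁻¹ ^ w j

abbrev Pos {p n : ℕ} (f : Fin n → Fin p) : Prop := ∀ j, 0 < ((f j : ℕ))

/-- strictly decreasing (consecutive form) -/
abbrev SDec {p n : ℕ} (f : Fin n → Fin p) : Prop :=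
  ∀ i j : Fin n, (j : ℕ) = (i : ℕ) + 1 → f j < f i

/-- weakly increasing up to position `l-1`, strictly decreasing from position `l` on,
no constraint between positions `l-1` and `l`. -/
abbrev Dp {p n : ℕ} (l : ℕ) (f : Fin n → Fin p) : Prop :=
  ∀ i j : Fin n, (j : ℕ) = (i : ℕ) + 1 →
    (((j : ℕ) < l → f i ≤ f j) ∧ (l < (j : ℕ) → f j < f i))

/-- weakly increasing up to position `l-1`, strictly decreasing from position `l-1` on. -/
abbrev Cp {p n : ℕ} (l : ℕ) (f : Fin n → Fin p) : Prop :=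
  ∀ i j : Fin n, (j : ℕ) = (i : ℕ) + 1 →
    (((j : ℕ) < l → f i ≤ f j) ∧ (l ≤ (j : ℕ) → f j < f i))

def SDsum (p : ℕ) {n : ℕ} (w : Fin n → ℕ) : ZMod p :=
  ∑ u ∈ Finset.univ.filter (fun u : Fin n → Fin p => SDec u ∧ Pos u), pprod p w u

def SumD (p : ℕ) {n : ℕ} (w : Fin n → ℕ) (l : ℕ) : ZMod p :=
  ∑ f ∈ Finset.univ.filter (fun f : Fin n → Fin p => Dp l f ∧ Pos f), pprod p w f

def SumC (p : ℕ) {n : ℕ} (w : Fin n → ℕ) (l : ℕ) : ZMod p :=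
  ∑ f ∈ Finset.univ.filter (fun f : Fin n → Fin p => Cp l f ∧ Pos f), pprod p w f

lemma consec_rel {α : Type*} {R : α → α → Prop}
    (hR : ∀ {a b c : α}, R a b → R b c → R a c) {n : ℕ} (f : Fin n → α)
    (h : ∀ i j : Fin n, (j : ℕ) = (i : ℕ) + 1 → R (f i) (f j)) :
    ∀ j1 j2 : Fin n, j1 < j2 → R (f j1) (f j2) := by
  intro j1 j2 hlt
  obtain ⟨m, hm⟩ := j2
  induction m with
  | zero => exact absurd hlt (by simp [Fin.lt_def])
  | succ m ih =>
    have hmn : m < n := by omega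
    rcases Nat.lt_or_ge (j1 : ℕ) m with h1 | h1
    · exact hR (ih hmn (by simp [Fin.lt_def]; omega))
        (h ⟨m, hmn⟩ ⟨m + 1, hm⟩ rfl)
    · have : (j1 : ℕ) = m := by
        have := hlt; simp [Fin.lt_def] at this; omega
      have hj1 : j1 = ⟨m, hmn⟩ := by ext; exact this
      rw [hj1]
      exact h _ _ rfl

lemma telescope {M : Type*} [CommRing M] (g : ℕ → M) (r : ℕ) :
    ∑ l ∈ Finset.range (r + 1), (-1 : M) ^ l * (g l + g (l + 1))
      = g 0 + (-1 : M) ^ r * g (r + 1) := by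
  induction r with
  | zero => simp
  | succ r ih =>
    rw [Finset.sum_range_succ, ih, pow_succ]
    ring

lemma ZSfin_cast (p : ℕ) {n m : ℕ} (h : n = m) (w1 : Fin n → ℕ) (w2 : Fin m → ℕ)
    (hw : ∀ i : Fin n, w1 i = w2 (Fin.cast h i)) : ZSfin p w1 = ZSfin p w2 := by
  subst h
  have : w1 = w2 := funext fun i => by simpa using hw i
  rw [this]

lemma Zfin_cast (p : ℕ) {n m : ℕ} (h : n = m) (w1 : Fin n → ℕ) (w2 : Fin m → ℕ)
    (hw : ∀ i : Fin n, w1 i = w2 (Fin.cast h i)) : Zfin p w1 = Zfin p w2 := by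
  subst h
  have : w1 = w2 := funext fun i => by simpa using hw i
  rw [this]

lemma SDsum_cast (p : ℕ) {n m : ℕ} (h : n = m) (w1 : Fin n → ℕ) (w2 : Fin m → ℕ)
    (hw : ∀ i : Fin n, w1 i = w2 (Fin.cast h i)) : SDsum p w1 = SDsum p w2 := by
  subst h
  have : w1 = w2 := funext fun i => by simpa using hw i
  rw [this]

lemma SumD_cast (p : ℕ) {n m : ℕ} (h : n = m) (w1 : Fin n → ℕ) (w2 : Fin m → ℕ)
    (hw : ∀ i : Fin n, w1 i = w2 (Fin.cast h i)) (l : ℕ) :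
    SumD p w1 l = SumD p w2 l := by
  subst h
  have : w1 = w2 := funext fun i => by simpa using hw i
  rw [this]

/-- reversal: `Z` equals the strictly decreasing sum with reversed weights -/
lemma Zfin_rev (p : ℕ) {n : ℕ} (w : Fin n → ℕ) :
    Zfin p w = SDsum p (fun j => w (Fin.rev j)) := by
  rw [Zfin, SDsum]
  refine Finset.sum_bij' (fun u _ => u ∘ Fin.rev) (fun v _ => v ∘ Fin.rev) ?_ ?_ ?_ ?_ ?_
  · intro u hu
    simp only [Finset.mem_filter, Finset.mem_univ, true_and] at hu ⊢
    refine ⟨fun i j hij => ?_, fun j => hu.2 _⟩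
    exact hu.1 _ _ (by rw [Fin.lt_def, Fin.val_rev, Fin.val_rev]; omega)
  · intro v hv
    simp only [Finset.mem_filter, Finset.mem_univ, true_and] at hv ⊢
    refine ⟨fun j1 j2 hlt => ?_, fun j => hv.2 _⟩
    have hall : ∀ a b : Fin n, a < b → v b < v a :=
      consec_rel (R := fun x y => y < x) (fun hab hbc => lt_trans hbc hab) v hv.1
    exact hall _ _ (by rw [Fin.lt_def, Fin.val_rev, Fin.val_rev]; omega)
  · intro u _; funext i; simp
  · intro v _; funext i; simp
  · intro u _
    rw [pprod]
    exact (Equiv.prod_comp Fin.revPerm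
      (fun j => (((u j : ℕ) : ZMod p))⁻¹ ^ w j)).symm

/-- `ZL` of a reversed list as a strictly decreasing sum. -/
lemma ZL_reverse (p : ℕ) (b : List ℕ) : ZL p b.reverse = SDsum p b.get := by
  rw [ZL]
  have h : b.reverse.length = b.length := b.length_reverse
  rw [Zfin_cast p h b.reverse.get (fun i : Fin b.length => b.reverse.get (Fin.cast h.symm i))
    (fun i => by simp)]
  rw [Zfin_rev]
  congr 1
  funext j
  simp only [Fin.cast, Fin.val_rev, List.get_eq_getElem, List.getElem_reverse]
  congr 1
  omega

lemma append_at_lt {l s : ℕ} {α : Sort*} (a : Fin l → α) (b : Fin s → α) (i : Fin (l + s))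
    (h : (i : ℕ) < l) : Fin.append a b i = a ⟨i, h⟩ := by
  have : i = Fin.castAdd s ⟨i, h⟩ := by ext; rfl
  conv_lhs => rw [this, Fin.append_left]

lemma append_at_ge {l s : ℕ} {α : Sort*} (a : Fin l → α) (b : Fin s → α) (i : Fin (l + s))
    (h : l ≤ (i : ℕ)) : Fin.append a b i = b ⟨(i : ℕ) - l, by omega⟩ := by
  have : i = Fin.natAdd l ⟨(i : ℕ) - l, by omega⟩ := by ext; simp; omega
  conv_lhs => rw [this, Fin.append_right]

/-- Merging the star sum and the strictly decreasing sum. -/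
lemma merge_core (p l s : ℕ) (wa : Fin l → ℕ) (wb : Fin s → ℕ) :
    ZSfin p wa * SDsum p wb = SumD p (Fin.append wa wb) l := by
  rw [ZSfin, SDsum, SumD, Finset.sum_mul_sum, ← Finset.sum_product']
  refine Finset.sum_bij' (fun x _ => Fin.append x.1 x.2)
    (fun f _ => (f ∘ Fin.castAdd s, f ∘ Fin.natAdd l)) ?_ ?_ ?_ ?_ ?_
  · rintro ⟨m, u⟩ hx
    simp only [Finset.mem_product, Finset.mem_filter, Finset.mem_univ, true_and] at hx
    obtain ⟨⟨hm, hmpos⟩, hu, hupos⟩ := hx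
    simp only [Finset.mem_filter, Finset.mem_univ, true_and]
    constructor
    · intro i j hij
      constructor
      · intro hjl
        have hil : (i : ℕ) < l := by omega
        rw [append_at_lt m u i hil, append_at_lt m u j hjl]
        exact hm _ _ (Fin.mk_lt_mk.mpr (by omega))
      · intro hlj
        have hil : l ≤ (i : ℕ) := by omega
        rw [append_at_ge m u i hil, append_at_ge m u j (by omega)]
        exact hu _ _ (by simp; omega)
    · intro j
      by_cases hjl : (j : ℕ) < l
      · rw [append_at_lt m u j hjl]; exact hmpos _
      · rw [append_at_ge m u j (by omega)]; exact hupos _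
  · intro f hf
    simp only [Finset.mem_filter, Finset.mem_univ, true_and] at hf
    obtain ⟨hD, hpos⟩ := hf
    simp only [Finset.mem_product, Finset.mem_filter, Finset.mem_univ, true_and]
    refine ⟨⟨?_, fun j => hpos _⟩, ?_, fun j => hpos _⟩
    · refine consec_rel (R := (· ≤ ·)) (fun hab hbc => le_trans hab hbc) _ ?_
      intro i j hij
      exact (hD (Fin.castAdd s i) (Fin.castAdd s j) (by simp [hij])).1 (by simpa using j.2)
    · intro i j hij
      exact (hD (Fin.natAdd l i) (Fin.natAdd l j) (by simp; omega)).2 (by simp; omega)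
  · rintro ⟨m, u⟩ _
    refine Prod.ext ?_ ?_ <;> funext i <;>
      simp [Function.comp, Fin.append_left, Fin.append_right]
  · intro f _
    funext i
    show Fin.append (f ∘ Fin.castAdd s) (f ∘ Fin.natAdd l) i = f i
    by_cases hil : (i : ℕ) < l
    · rw [append_at_lt _ _ i hil]
      exact congrArg f (Fin.ext rfl)
    · rw [append_at_ge _ _ i (by omega)]
      exact congrArg f (Fin.ext (by simp; omega))
  · rintro ⟨m, u⟩ _
    simp only [pprod]
    rw [Fin.prod_univ_add]
    simp [Fin.append_left, Fin.append_right]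

/-- Lemma A: the product term equals the merged sum. -/
lemma prod_eq_SumD (p : ℕ) (k : List ℕ) (l : ℕ) (hl : l ≤ k.length) :
    ZSL p (k.take l) * ZL p ((k.drop l).reverse) = SumD p k.get l := by
  have ha : (k.take l).length = l := by simp [hl]
  have hb : (k.drop l).length = k.length - l := by simp
  have h2 : l + (k.length - l) = k.length := by omega
  rw [ZSL, ZSfin_cast p ha (k.take l).get (fun i : Fin l => k.get ⟨i, by omega⟩)
    (fun i => by simp [List.get_eq_getElem, Fin.cast])]
  rw [ZL_reverse, SDsum_cast p hb (k.drop l).get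
    (fun j : Fin (k.length - l) => k.get ⟨l + j, by omega⟩)
    (fun i => by simp [List.get_eq_getElem, Fin.cast])]
  rw [merge_core]
  refine SumD_cast p h2 _ k.get ?_ l
  intro j
  by_cases hjl : (j : ℕ) < l
  · rw [append_at_lt _ _ j hjl]
    simp [List.get_eq_getElem, Fin.cast]
  · rw [append_at_ge _ _ j (by omega)]
    simp only [List.get_eq_getElem, Fin.cast]
    congr 1
    omega

/-- splitting the free comparison at position `l-1, l`. -/
lemma SumD_split (p : ℕ) {n : ℕ} (w : Fin n → ℕ) (l : ℕ) (h1 : 1 ≤ l) (h2 : l < n) :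
    SumD p w l = SumC p w (l + 1) + SumC p w l := by
  rw [SumD, ← Finset.sum_filter_add_sum_filter_not _
    (fun f : Fin n → Fin p => f ⟨l - 1, by omega⟩ ≤ f ⟨l, h2⟩)]
  congr 1
  · rw [SumC, Finset.filter_filter]
    apply Finset.sum_congr _ (fun _ _ => rfl)
    apply Finset.filter_congr
    intro f _
    constructor
    · rintro ⟨⟨hD, hpos⟩, hle⟩
      refine ⟨fun i j hij => ⟨fun hjl => ?_, fun hlj => ?_⟩, hpos⟩
      · rcases Nat.lt_or_ge (j : ℕ) l with hc | hc
        · exact (hD i j hij).1 hc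
        · have hjeq : j = ⟨l, h2⟩ := Fin.ext (show (j : ℕ) = l by omega)
          have hieq : i = ⟨l - 1, by omega⟩ := Fin.ext (show (i : ℕ) = l - 1 by omega)
          rw [hjeq, hieq]; exact hle
      · exact (hD i j hij).2 (by omega)
    · rintro ⟨hC, hpos⟩
      refine ⟨⟨fun i j hij => ⟨fun hjl => (hC i j hij).1 (by omega),
        fun hlj => (hC i j hij).2 (by omega)⟩, hpos⟩, ?_⟩
      exact (hC ⟨l - 1, by omega⟩ ⟨l, h2⟩ (show l = (l - 1) + 1 by omega)).1
        (show l < l + 1 by omega)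
  · rw [SumC, Finset.filter_filter]
    apply Finset.sum_congr _ (fun _ _ => rfl)
    apply Finset.filter_congr
    intro f _
    constructor
    · rintro ⟨⟨hD, hpos⟩, hnle⟩
      refine ⟨fun i j hij => ⟨fun hjl => (hD i j hij).1 hjl, fun hlj => ?_⟩, hpos⟩
      rcases Nat.lt_or_ge l (j : ℕ) with hc | hc
      · exact (hD i j hij).2 hc
      · have hjeq : j = ⟨l, h2⟩ := Fin.ext (show (j : ℕ) = l by omega)
        have hieq : i = ⟨l - 1, by omega⟩ := Fin.ext (show (i : ℕ) = l - 1 by omega)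
        rw [hjeq, hieq]; exact lt_of_not_ge hnle
    · rintro ⟨hC, hpos⟩
      refine ⟨⟨fun i j hij => ⟨fun hjl => (hC i j hij).1 hjl,
        fun hlj => (hC i j hij).2 (by omega)⟩, hpos⟩, ?_⟩
      exact not_le_of_gt ((hC ⟨l - 1, by omega⟩ ⟨l, h2⟩ (show l = (l - 1) + 1 by omega)).2
        (le_refl l))

lemma SumD_zero (p : ℕ) {n : ℕ} (w : Fin n → ℕ) : SumD p w 0 = SumC p w 1 := by
  rw [SumD, SumC]
  apply Finset.sum_congr _ (fun _ _ => rfl)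
  apply Finset.filter_congr
  intro f _
  constructor
  · rintro ⟨hD, hpos⟩
    exact ⟨fun i j hij => ⟨by omega, fun _ => (hD i j hij).2 (by omega)⟩, hpos⟩
  · rintro ⟨hC, hpos⟩
    exact ⟨fun i j hij => ⟨by omega, fun _ => (hC i j hij).2 (by omega)⟩, hpos⟩

lemma SumD_top (p : ℕ) {n : ℕ} (w : Fin n → ℕ) : SumD p w n = SumC p w n := by
  rw [SumD, SumC]
  apply Finset.sum_congr _ (fun _ _ => rfl)
  apply Finset.filter_congr
  intro f _
  constructor
  · rintro ⟨hD, hpos⟩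
    exact ⟨fun i j hij => ⟨fun hjl => (hD i j hij).1 hjl, fun hlj => absurd j.2 (by omega)⟩, hpos⟩
  · rintro ⟨hC, hpos⟩
    exact ⟨fun i j hij => ⟨fun hjl => (hC i j hij).1 hjl, fun hlj => absurd j.2 (by omega)⟩, hpos⟩

end AntipodeAux

open AntipodeAux in
/-- **Antipode relation**: for positive integers `k₁,…,k_r`, for all but finitely many
primes `p`, `∑_{l=0}^{r} (-1)^l Z*_p(k₁,…,k_l) Z_p(k_r,…,k_{l+1}) = 0` in `ℤ/pℤ`;
equivalently `∑_{l=0}^{r} (-1)^l ζ*_𝒜(k₁,…,k_l) ζ_𝒜(k_r,…,k_{l+1}) = 0`. -/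
theorem antipode_fmzv (k : List ℕ) (hne : k ≠ []) (hpos : ∀ a ∈ k, 0 < a) :
    ∃ N : ℕ, ∀ p : ℕ, p.Prime → N < p →
      ∑ l ∈ Finset.range (k.length + 1),
        (-1 : ZMod p) ^ l * ZSL p (k.take l) * ZL p ((k.drop l).reverse) = 0 := by
  refine ⟨0, fun p _ _ => ?_⟩
  set r := k.length with hr
  have hr1 : 1 ≤ r := by
    rw [hr]
    exact List.length_pos_iff.mpr hne
  set g : ℕ → ZMod p := fun l =>
    if l = 0 then 0 else if l = r + 1 then 0 else SumC p k.get l with hg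
  have hg0 : g 0 = 0 := by simp [hg]
  have hgr1 : g (r + 1) = 0 := by simp [hg]
  have hgmid : ∀ l, 1 ≤ l → l ≤ r → g l = SumC p k.get l := by
    intro l h1 h2
    simp only [hg]
    rw [if_neg (by omega), if_neg (by omega)]
  have hterm : ∀ l ∈ Finset.range (r + 1),
      (-1 : ZMod p) ^ l * ZSL p (k.take l) * ZL p ((k.drop l).reverse)
        = (-1 : ZMod p) ^ l * (g l + g (l + 1)) := by
    intro l hl
    rw [Finset.mem_range] at hl
    have hlr : l ≤ r := by omega
    rw [mul_assoc, prod_eq_SumD p k l hlr]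
    congr 1
    rcases Nat.eq_zero_or_pos l with h0 | h0
    · subst h0
      rw [SumD_zero, hg0, hgmid 1 (le_refl 1) hr1, zero_add]
    · rcases Nat.lt_or_ge l r with hltr | hger
      · rw [SumD_split p k.get l h0 hltr, hgmid l h0 hlr, hgmid (l + 1) (by omega) (by omega)]
        ring
      · have hleq : l = r := by omega
        rw [hleq, SumD_top, hgmid r hr1 (le_refl r), hgr1, add_zero]
  rw [Finset.sum_congr rfl hterm, telescope, hg0, hgr1]
  simp
end

section
/- (Symmetric sum formula; Hoffman, Murahara) For any positive integers k1,…,kr, for all but finitely many primes p one has Σ_{σ ∈ 𝔖_r} Z_p(k_{σ(1)},…,k_{σ(r)}) = 0 in ℤ/pℤ, where 𝔖_r is the symmetric group on r letters. Equivalently, Σ_{σ ∈ 𝔖_r} ζ_𝒜(k_{σ(1)},…,k_{σ(r)}) = 0. -/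
/-!
Pairs `(σ, n)` with `n` strictly increasing correspond, via `n ∘ σ⁻¹`, to injective tuples, so
the symmetric sum is `∑ ∏ⱼ n_j^{-k_j}` over all injective `n : Fin r → ℤ/pℤ` (tuples containing
`0` contribute nothing, as `0⁻¹ = 0` and `k_j > 0`). Such a sum vanishes once
`k₁ + ⋯ + k_r < p - 1`, because the power sums `∑ₓ x^{-k}` over `ℤ/pℤ` vanish for `k < p - 1`.
By induction on `r`: freeing the first entry `x` of an injective tuple factors out
`∑ₓ x^{-k₁} = 0`, and the correction terms where `x` collides with some `n_i` are injective
sums of length `r - 1` with `k₁` added to `k_i`.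
-/

open Finset

section InjectiveSums

variable {α M : Type*} [Fintype α] [DecidableEq α]

theorem sum_injective_fin_succ [AddCommMonoid M] {r : ℕ} (F : (Fin (r + 1) → α) → M) :
    ∑ n : Fin (r + 1) → α with Function.Injective n, F n =
      ∑ m : Fin r → α with Function.Injective m, ∑ x ∈ univ \ univ.image m, F (Fin.cons x m) := by
  rw [sum_filter, sum_filter, ← (Fin.consEquiv fun _ => α).sum_comp, Fintype.sum_prod_type_right]
  refine Fintype.sum_congr _ _ fun m => ?_
  simp only [Fin.consEquiv, Equiv.coe_fn_mk, Fin.cons_injective_iff, and_comm (a := _ ∉ _), ite_and]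
  split_ifs with hm
  · rw [sum_ite, sum_const_zero, add_zero]
    congr 1
    ext x; simp
  · simp

theorem prod_pow_add_pi_single {R ι : Type*} [CommMonoid R] [Fintype ι] [DecidableEq ι]
    (w : ι → R) (k : ι → ℕ) (i : ι) (c : ℕ) :
    ∏ j, w j ^ (k + Pi.single i c : ι → ℕ) j = (∏ j, w j ^ k j) * w i ^ c := by
  simp only [Pi.add_apply, pow_add, prod_mul_distrib, Pi.single_apply, pow_ite, pow_zero,
    prod_ite_eq', mem_univ, if_true]

variable {R : Type*} [CommRing R]

theorem sum_injective_prod_pow_eq_zero (w : α → R) {K : ℕ}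
    (hw : ∀ k < K, ∑ x, w x ^ k = 0) {r : ℕ} (hr : 0 < r) (k : Fin r → ℕ) (hk : ∑ j, k j < K) :
    ∑ n : Fin r → α with Function.Injective n, ∏ j, w (n j) ^ k j = 0 := by
  induction r with
  | zero => exact absurd hr (lt_irrefl 0)
  | succ r ih =>
    set c := k 0
    set t := Fin.tail k
    have hsum : c + ∑ j, t j < K := by rwa [Fin.sum_univ_succ] at hk
    have hcollision : ∀ i, ∑ m : Fin r → α with Function.Injective m,
        (∏ j, w (m j) ^ t j) * w (m i) ^ c = 0 := fun i => by
      have hk' : ∑ j, (t + Pi.single i c : Fin r → ℕ) j < K := by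
        simp only [Pi.add_apply, sum_add_distrib, sum_pi_single', if_pos (mem_univ i)]
        omega
      have := ih i.pos _ hk'
      rwa [sum_congr rfl fun m _ => prod_pow_add_pi_single (fun j => w (m j)) t i c] at this
    calc ∑ n : Fin (r + 1) → α with Function.Injective n, ∏ j, w (n j) ^ k j
        = ∑ m : Fin r → α with Function.Injective m,
            (∏ j, w (m j) ^ t j) * ((∑ x, w x ^ c) - ∑ i, w (m i) ^ c) := by
          rw [sum_injective_fin_succ]
          refine sum_congr rfl fun m hm => ?_
          rw [← sum_image (f := fun x => w x ^ c) fun a _ b _ h => (mem_filter.1 hm).2 h,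
            ← sum_sdiff_eq_sub (subset_univ _), mul_sum]
          simp [Fin.prod_univ_succ, mul_comm, t, c, Fin.tail]
      _ = 0 := by
          simp_rw [hw c (by omega), zero_sub, mul_neg, mul_sum, sum_neg_distrib]
          rw [sum_comm, neg_eq_zero]
          exact sum_eq_zero fun i _ => hcollision i

end InjectiveSums

theorem sum_perm_sum_strictMono_comp_symm {β M : Type*} [LinearOrder β] [Fintype β]
    [AddCommMonoid M] {r : ℕ} (F : (Fin r → β) → M) :
    ∑ σ : Equiv.Perm (Fin r), ∑ n : Fin r → β with StrictMono n, F (n ∘ σ.symm) =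
      ∑ n : Fin r → β with Function.Injective n, F n := by
  rw [← sum_product']
  refine sum_nbij' (fun q => q.2 ∘ q.1.symm) (fun m => (Tuple.sort m, m ∘ Tuple.sort m))
    ?_ ?_ ?_ ?_ fun _ _ => rfl
  · rintro ⟨σ, n⟩ h
    simp only [mem_product, mem_filter, mem_univ, true_and] at h
    simpa using h.injective.comp σ.symm.injective
  · intro m hm
    simp only [mem_filter, mem_univ, true_and] at hm
    simpa using (Tuple.monotone_sort m).strictMono_of_injective (hm.comp (Tuple.sort m).injective)
  · rintro ⟨σ, n⟩ h
    simp only [mem_product, mem_filter, mem_univ, true_and] at h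
    have hσ : σ = Tuple.sort (n ∘ σ.symm) := Tuple.eq_sort_iff.2
      ⟨by simpa [Function.comp_assoc] using h.monotone,
        fun i j hij hn => absurd hn (by simpa using (h hij).ne)⟩
    simp [← hσ, Function.comp_assoc]
  · intro m _
    simp [Function.comp_assoc]

theorem ZMod.sum_inv_natCast_fin_pow_eq_zero {p : ℕ} (hp : p.Prime) {k : ℕ} (hk : k < p - 1) :
    ∑ x : Fin p, ((x : ℕ) : ZMod p)⁻¹ ^ k = 0 := by
  have := Fact.mk hp
  have hcast : Function.Bijective fun x : Fin p => ((x : ℕ) : ZMod p) :=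
    (Fintype.bijective_iff_surjective_and_card _).2
      ⟨fun y => ⟨⟨y.val, y.val_lt⟩, ZMod.natCast_zmod_val y⟩, by simp⟩
  rw [Fintype.sum_bijective _ hcast _ (fun y : ZMod p => y⁻¹ ^ k) fun _ => rfl,
    Fintype.sum_equiv (Equiv.inv _) (fun y => y⁻¹ ^ k) (fun y => y ^ k) fun _ => rfl]
  exact FiniteField.sum_pow_lt_card_sub_one _ _ (by rwa [ZMod.card])

theorem Zfin_eq_sum_strictMono (p : ℕ) {r : ℕ} (k : Fin r → ℕ) (hk : ∀ j, 0 < k j) :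
    Zfin p k = ∑ n : Fin r → Fin p with StrictMono n, ∏ j, ((n j : ℕ) : ZMod p)⁻¹ ^ k j := by
  rw [Zfin, ← filter_filter, sum_filter_of_ne]
  · rfl
  rintro n - hn j
  by_contra h0
  exact hn <| prod_eq_zero (mem_univ j) <| by
    simp [Nat.eq_zero_of_not_pos h0, ZMod.inv_zero, zero_pow (hk j).ne']

/-- **Symmetric sum formula** (Hoffman, Murahara): for positive integers `k₁,…,k_r`, for
all but finitely many primes `p`, `∑_{σ ∈ 𝔖_r} Z_p(k_{σ(1)},…,k_{σ(r)}) = 0` in `ℤ/pℤ`;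
equivalently `∑_{σ ∈ 𝔖_r} ζ_𝒜(k_{σ(1)},…,k_{σ(r)}) = 0`. -/
theorem symmetric_sum_fmzv (r : ℕ) (hr : 0 < r) (ks : Fin r → ℕ) (hpos : ∀ j, 0 < ks j) :
    ∃ N : ℕ, ∀ p : ℕ, p.Prime → N < p →
      ∑ σ : Equiv.Perm (Fin r), Zfin p (fun j => ks (σ j)) = 0 := by
  refine ⟨∑ j, ks j + 1, fun p hp hNp => ?_⟩
  calc ∑ σ : Equiv.Perm (Fin r), Zfin p (fun j => ks (σ j))
      = ∑ σ : Equiv.Perm (Fin r), ∑ n : Fin r → Fin p with StrictMono n,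
          ∏ j, (((n ∘ σ.symm) j : ℕ) : ZMod p)⁻¹ ^ ks j := by
        refine sum_congr rfl fun σ _ => ?_
        rw [Zfin_eq_sum_strictMono p _ fun j => hpos (σ j)]
        refine sum_congr rfl fun n _ => ?_
        rw [← Equiv.prod_comp σ fun j => (((n ∘ σ.symm) j : ℕ) : ZMod p)⁻¹ ^ ks j]
        simp
    _ = ∑ n : Fin r → Fin p with Function.Injective n, ∏ j, ((n j : ℕ) : ZMod p)⁻¹ ^ ks j :=
        sum_perm_sum_strictMono_comp_symm fun n : Fin r → Fin p =>
          ∏ j, ((n j : ℕ) : ZMod p)⁻¹ ^ ks j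
    _ = 0 := sum_injective_prod_pow_eq_zero _
        (fun _ hk => ZMod.sum_inv_natCast_fin_pow_eq_zero hp hk) hr ks (by omega)
end

section
/- (Symmetric sum formula, star version; Hoffman, Murahara) For any positive integers k1,…,kr, for all but finitely many primes p one has Σ_{σ ∈ 𝔖_r} Z*_p(k_{σ(1)},…,k_{σ(r)}) = 0 in ℤ/pℤ, where 𝔖_r is the symmetric group on r letters. Equivalently, Σ_{σ ∈ 𝔖_r} ζ*_𝒜(k_{σ(1)},…,k_{σ(r)}) = 0. -/
open Finset

theorem sum_prod_inv_pow_eq_zero_of_smul_mem {K ι : Type*} [Field K] [Fintype K] [Fintype ι]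
    (s : Finset (ι → K)) (hs : ∀ c : Kˣ, ∀ m ∈ s, c • m ∈ s) (k : ι → ℕ) (hk0 : ∑ i, k i ≠ 0)
    (hk : ∑ i, k i < Fintype.card K - 1) :
    ∑ m ∈ s, ∏ i, (m i)⁻¹ ^ k i = 0 := by
  classical
  obtain ⟨c, hc⟩ : ∃ c : Kˣ, c ^ ∑ i, k i ≠ 1 := exists_pow_ne_one_of_isCyclic hk0
    (by rwa [Nat.card_eq_fintype_card, Fintype.card_units])
  have hscale (m : ι → K) :
      ∏ i, ((c⁻¹ • m) i)⁻¹ ^ k i = (c : K) ^ (∑ i, k i) * ∏ i, (m i)⁻¹ ^ k i := by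
    simp only [Pi.smul_apply, Units.smul_def, smul_eq_mul, mul_inv, Units.val_inv_eq_inv_val,
      inv_inv, mul_pow, prod_mul_distrib, prod_pow_eq_pow_sum]
  have hinv : ∑ m ∈ s, ∏ i, ((c⁻¹ • m) i)⁻¹ ^ k i = ∑ m ∈ s, ∏ i, (m i)⁻¹ ^ k i :=
    sum_nbij' (c⁻¹ • ·) (c • ·) (hs c⁻¹) (hs c) (fun m _ => smul_inv_smul c m)
      (fun m _ => inv_smul_smul c m) (fun _ _ => rfl)
  simp only [hscale, ← mul_sum] at hinv
  have hc' : (c : K) ^ ∑ i, k i ≠ 1 := by rwa [← Units.val_pow_eq_pow_val, Ne, Units.val_eq_one]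
  exact (mul_left_eq_self₀.mp hinv).resolve_left hc'

section Tuple

open Equiv

variable {α : Type*} [LinearOrder α] {r : ℕ}

open Classical in
theorem card_monotone_comp_perm_eq_card_comp_perm_eq (f : Fin r → α) :
    #{σ : Perm (Fin r) | Monotone (f ∘ σ)} = #{σ : Perm (Fin r) | f ∘ σ = f} := by
  set τ := Tuple.sort f
  refine card_nbij' (· * τ⁻¹) (· * τ) (fun σ hσ => ?_) (fun σ hσ => ?_) (fun σ _ => by simp)
    (fun σ _ => by simp)
  · simp only [coe_filter, Set.mem_ofPred_eq, mem_univ, true_and] at hσ ⊢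
    rw [Perm.coe_mul, ← Function.comp_assoc, Tuple.comp_sort_eq_comp_iff_monotone.mpr hσ,
      Function.comp_assoc, ← Perm.coe_mul, mul_inv_cancel, Perm.coe_one, Function.comp_id]
  · simp only [coe_filter, Set.mem_ofPred_eq, mem_univ, true_and] at hσ ⊢
    rw [Perm.coe_mul, ← Function.comp_assoc, hσ]
    exact Tuple.monotone_sort f

open Classical in
theorem sum_perm_sum_monotone_comp_inv {M : Type*} [Fintype α] [AddCommMonoid M]
    (F : (Fin r → α) → M) :
    ∑ σ : Perm (Fin r), ∑ n with Monotone n, F (n ∘ ⇑σ⁻¹) =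
      ∑ σ : Perm (Fin r), ∑ m with m ∘ ⇑σ = m, F m := by
  have hreindex : ∀ σ : Perm (Fin r),
      ∑ n with Monotone n, F (n ∘ ⇑σ⁻¹) = ∑ m with Monotone (m ∘ σ), F m := fun σ =>
    sum_nbij' (· ∘ ⇑σ⁻¹) (· ∘ ⇑σ) (fun n hn => by simpa [Function.comp_assoc] using hn)
      (fun m hm => by simpa using hm) (fun n _ => by simp [Function.comp_assoc])
      (fun m _ => by simp [Function.comp_assoc]) (fun _ _ => rfl)
  simp only [hreindex, sum_filter]
  rw [sum_comm]
  conv_rhs => rw [sum_comm]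
  refine sum_congr rfl fun m _ => ?_
  rw [← sum_filter, ← sum_filter, sum_const, sum_const,
    card_monotone_comp_perm_eq_card_comp_perm_eq]

end Tuple

theorem ZMod.natCast_fin_bijective (p : ℕ) [NeZero p] :
    Function.Bijective (fun v : Fin p => ((v : ℕ) : ZMod p)) := by
  rw [Fintype.bijective_iff_injective_and_card]
  refine ⟨fun a b hab => Fin.ext ?_, by simp⟩
  simpa [ZMod.val_natCast_of_lt a.2, ZMod.val_natCast_of_lt b.2] using congrArg ZMod.val hab

theorem sum_filter_comp_perm_eq_self_equiv {ι α β M : Type*} [Fintype ι] [DecidableEq ι]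
    [Fintype α] [DecidableEq α] [Fintype β] [DecidableEq β] [AddCommMonoid M]
    (e : α ≃ β) (σ : Equiv.Perm ι) (F : (ι → β) → M) :
    ∑ m : ι → α with m ∘ σ = m, F (e ∘ m) = ∑ m : ι → β with m ∘ σ = m, F m :=
  sum_nbij' (e ∘ ·) (e.symm ∘ ·)
    (fun m hm => by simp_all [Function.comp_assoc]) (fun m hm => by simp_all [Function.comp_assoc])
    (fun m _ => by simp [← Function.comp_assoc]) (fun m _ => by simp [← Function.comp_assoc])
    (fun _ _ => rfl)

open Classical in
theorem ZSfin_eq_sum_monotone (p : ℕ) {r : ℕ} (k : Fin r → ℕ) (hk : ∀ j, 0 < k j) :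
    ZSfin p k = ∑ n : Fin r → Fin p with Monotone n, ∏ j, (((n j : ℕ) : ZMod p))⁻¹ ^ k j := by
  refine sum_subset (fun n hn => ?_) (fun n hmono hn => ?_)
  · simp only [mem_filter, mem_univ, true_and] at hn ⊢
    exact monotone_iff_forall_lt.mpr hn.1
  · simp only [mem_filter, mem_univ, true_and, not_and, not_forall, not_lt,
      Nat.le_zero] at hmono hn
    obtain ⟨j, hj⟩ := hn (monotone_iff_forall_lt.mp hmono)
    exact prod_eq_zero (mem_univ j) (by simp [hj, ZMod.inv_zero, zero_pow (hk j).ne'])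

open Classical in
theorem ZSfin_comp_perm_eq_sum_monotone (p : ℕ) {r : ℕ} (k : Fin r → ℕ) (hk : ∀ j, 0 < k j)
    (σ : Equiv.Perm (Fin r)) :
    ZSfin p (fun j => k (σ j)) =
      ∑ n : Fin r → Fin p with Monotone n, ∏ i, (((n (σ⁻¹ i) : ℕ) : ZMod p))⁻¹ ^ k i := by
  rw [ZSfin_eq_sum_monotone p _ fun j => hk (σ j)]
  exact sum_congr rfl fun n _ => Fintype.prod_equiv σ _ _ fun j => by simp

/-- **Symmetric sum formula, star version** (Hoffman, Murahara): for positive integers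
`k₁,…,k_r`, for all but finitely many primes `p`,
`∑_{σ ∈ 𝔖_r} Z*_p(k_{σ(1)},…,k_{σ(r)}) = 0` in `ℤ/pℤ`; equivalently
`∑_{σ ∈ 𝔖_r} ζ*_𝒜(k_{σ(1)},…,k_{σ(r)}) = 0`. -/
theorem symmetric_sum_fmzsv (r : ℕ) (hr : 0 < r) (ks : Fin r → ℕ) (hpos : ∀ j, 0 < ks j) :
    ∃ N : ℕ, ∀ p : ℕ, p.Prime → N < p →
      ∑ σ : Equiv.Perm (Fin r), ZSfin p (fun j => ks (σ j)) = 0 := by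
  classical
  refine ⟨∑ j, ks j + 1, fun p hp hNp => ?_⟩
  have := Fact.mk hp
  have hW0 : ∑ j, ks j ≠ 0 := (sum_pos (fun j _ => hpos j) ⟨⟨0, hr⟩, mem_univ _⟩).ne'
  let e : Fin p ≃ ZMod p := Equiv.ofBijective _ (ZMod.natCast_fin_bijective p)
  calc ∑ σ : Equiv.Perm (Fin r), ZSfin p (fun j => ks (σ j))
      = ∑ σ : Equiv.Perm (Fin r), ∑ n : Fin r → Fin p with Monotone n,
          ∏ i, (e (n (σ⁻¹ i)))⁻¹ ^ ks i :=
        sum_congr rfl fun σ _ => ZSfin_comp_perm_eq_sum_monotone p ks hpos σ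
    _ = ∑ σ : Equiv.Perm (Fin r), ∑ m : Fin r → Fin p with m ∘ σ = m, ∏ i, (e (m i))⁻¹ ^ ks i :=
        sum_perm_sum_monotone_comp_inv fun m => ∏ i, (e (m i))⁻¹ ^ ks i
    _ = ∑ σ : Equiv.Perm (Fin r), ∑ m : Fin r → ZMod p with m ∘ σ = m, ∏ i, (m i)⁻¹ ^ ks i :=
        sum_congr rfl fun σ _ =>
          sum_filter_comp_perm_eq_self_equiv e σ fun m => ∏ i, (m i)⁻¹ ^ ks i
    _ = 0 := by
        refine sum_eq_zero fun σ _ => sum_prod_inv_pow_eq_zero_of_smul_mem _ ?_ ks hW0 ?_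
        · intro c m hm
          simp only [mem_filter, mem_univ, true_and] at hm ⊢
          rw [Pi.smul_comp, hm]
        · rw [ZMod.card]
          omega
end

section
/- Let k, r be positive integers and i an integer with 1 ≤ i ≤ r < k, and set A := Σ_{l=1}^{k−r−1} 2^{l−1} G1((1^{i−1}, l+1, 1^{r−i}), k−r−l) + G1((1^r), k−r) ∈ 𝓘. Then for every index (a1,…,ar) of depth r and weight a1+⋯+ar = k, the coefficient of (a1,…,ar) in A equals 2^{a_i−1} if 1 ≤ a_i ≤ k−r, and equals 2^{k−r−1} if a_i = k−r+1 (note a_i ≤ k−r+1 always holds). -/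
lemma oplus_ofFn {n : ℕ} (b e : Fin n → ℕ) :
    oplus (List.ofFn b) (List.ofFn e) = List.ofFn (fun j => b j + e j) := by
  apply List.ext_getElem <;> simp [oplus]

lemma G1_coeff {n : ℕ} (b : Fin n → ℕ) (l : ℕ) (a : Fin n → ℕ) :
    G1 (List.ofFn b) l (List.ofFn a)
      = if (∀ j, b j ≤ a j) ∧ ∑ j, (a j - b j) = l then 1 else 0 := by
  unfold G1
  rw [List.length_ofFn]
  rw [Finsupp.finset_sum_apply]
  have key : ∀ e : Fin n → ℕ, oplus (List.ofFn b) (List.ofFn e) = List.ofFn a ↔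
      ((∀ j, b j ≤ a j) ∧ e = fun j => a j - b j) := by
    intro e
    rw [oplus_ofFn, List.ofFn_inj, funext_iff]
    constructor
    · intro h
      refine ⟨fun j => by have := h j; omega, funext fun j => by have := h j; omega⟩
    · rintro ⟨h1, h2⟩ j
      have := congrFun h2 j
      have := h1 j
      omega
  simp only [Finsupp.single_apply, key]
  by_cases hle : ∀ j, b j ≤ a j
  · simp only [eq_true hle, true_and]
    rw [Finset.sum_ite_eq' (Finset.Nat.antidiagonalTuple n l) (fun j => a j - b j) (fun _ => (1:ℚ))]
    simp [Finset.Nat.mem_antidiagonalTuple]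
  · simp [hle]

lemma geom2 (n : ℕ) : ∑ l ∈ Finset.Icc 1 n, (2:ℚ) ^ (l-1) = 2 ^ n - 1 := by
  induction n with
  | zero => simp
  | succ m ih =>
    rw [Finset.sum_Icc_succ_top (by omega), ih]
    have : m + 1 - 1 = m := by omega
    rw [this]
    ring

lemma midIdx_eq (r i v : ℕ) (h1 : 1 ≤ i) (h2 : i ≤ r) :
    midIdx r i v = List.ofFn (fun j : Fin r => if (j : ℕ) = i - 1 then v else 1) := by
  apply List.ext_getElem
  · simp [midIdx]; omega
  · intro n hn hn'
    simp only [midIdx, List.getElem_ofFn]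
    rcases lt_trichotomy n (i-1) with h | h | h
    · rw [List.getElem_append_left (by simpa using h), if_neg (by omega)]
      simp
    · subst h
      rw [List.getElem_append_right (by simp)]
      simp
    · rw [List.getElem_append_right (by simp; omega)]
      rw [List.getElem_cons]
      simp only [List.length_replicate]
      rw [dif_neg (by omega), if_neg (by omega)]
      apply List.getElem_replicate

/-- For `1 ≤ i ≤ r < k` and

`A = ∑_{l=1}^{k-r-1} 2^{l-1} G₁((1^{i-1}, l+1, 1^{r-i}), k-r-l) + G₁((1^r), k-r)`,
the coefficient in `A` of any index `(a₁,…,a_r)` of depth `r` and weight `k` equals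
`2^{a_i - 1}` if `a_i ≤ k - r`, and equals `2^{k-r-1}` if `a_i = k - r + 1`
(note `a_i ≤ k - r + 1` always holds). -/
theorem coeff_in_A (k r i : ℕ) (hi : 1 ≤ i) (hir : i ≤ r) (hrk : r < k)
    (A : IndexSpace)
    (hA : A = (∑ l ∈ Finset.Icc 1 (k - r - 1),
          (2 : ℚ) ^ (l - 1) • G1 (midIdx r i (l + 1)) (k - r - l)) +
        G1 (List.replicate r 1) (k - r))
    (a : Fin r → ℕ) (hpos : ∀ j, 1 ≤ a j) (hsum : ∑ j, a j = k) :
    (a ⟨i - 1, by omega⟩ ≤ k - r →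
        A (List.ofFn a) = (2 : ℚ) ^ (a ⟨i - 1, by omega⟩ - 1)) ∧
      (a ⟨i - 1, by omega⟩ = k - r + 1 →
        A (List.ofFn a) = (2 : ℚ) ^ (k - r - 1)) := by
  subst hA
  have hi1 : i - 1 < r := by omega
  have hm1 : 1 ≤ a ⟨i - 1, hi1⟩ := hpos _
  set m := a ⟨i - 1, hi1⟩ with hm
  have hG0 : G1 (List.replicate r 1) (k - r) (List.ofFn a) = 1 := by
    rw [← List.ofFn_const r 1, G1_coeff, if_pos]
    refine ⟨hpos, ?_⟩
    rw [Finset.sum_tsub_distrib _ (fun j _ => hpos j)]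
    simp [hsum]
  have hGl : ∀ l ∈ Finset.Icc 1 (k - r - 1),
      G1 (midIdx r i (l+1)) (k - r - l) (List.ofFn a)
        = if l + 1 ≤ m then 1 else 0 := by
    intro l hl
    rw [Finset.mem_Icc] at hl
    rw [midIdx_eq r i (l+1) hi hir, G1_coeff]
    by_cases hc : l + 1 ≤ m
    · have hb : ∀ j : Fin r, (if (j:ℕ) = i-1 then l+1 else 1) ≤ a j := by
        intro j
        by_cases hj : (j : ℕ) = i - 1
        · have hjp : j = ⟨i - 1, hi1⟩ := Fin.ext hj
          rw [if_pos hj, hjp]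
          exact hc
        · rw [if_neg hj]
          exact hpos j
      rw [if_pos hc, if_pos]
      refine ⟨hb, ?_⟩
      rw [Finset.sum_tsub_distrib _ (fun j _ => hb j)]
      have hbsum : ∑ j : Fin r, (if (j:ℕ) = i-1 then l+1 else 1) = r + l := by
        have : ∀ j : Fin r, (if (j:ℕ) = i-1 then l+1 else 1)
            = 1 + (if j = ⟨i - 1, hi1⟩ then l else 0) := by
          intro j
          by_cases hj : (j : ℕ) = i - 1
          · rw [if_pos hj, if_pos (Fin.ext hj)]; omega
          · rw [if_neg hj, if_neg (fun h => hj (by rw [h]))]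
        rw [Finset.sum_congr rfl (fun j _ => this j), Finset.sum_add_distrib]
        rw [Finset.sum_ite_eq' Finset.univ (⟨i - 1, hi1⟩ : Fin r) (fun _ => l)]
        simp
      rw [hsum, hbsum]
      omega
    · rw [if_neg hc, if_neg]
      rintro ⟨h1, -⟩
      have := h1 ⟨i - 1, hi1⟩
      simp at this
      exact hc this
  have hAval : ((∑ l ∈ Finset.Icc 1 (k - r - 1),
          (2 : ℚ) ^ (l - 1) • G1 (midIdx r i (l + 1)) (k - r - l)) +
        G1 (List.replicate r 1) (k - r)) (List.ofFn a)
      = (∑ l ∈ Finset.Icc 1 (k - r - 1),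
          (2 : ℚ) ^ (l - 1) * (if l + 1 ≤ m then 1 else 0)) + 1 := by
    rw [Finsupp.add_apply, Finsupp.finset_sum_apply, hG0]
    congr 1
    refine Finset.sum_congr rfl fun l hl => ?_
    rw [Finsupp.smul_apply, hGl l hl, smul_eq_mul]
  constructor
  · intro hle
    rw [hAval]
    have hfilt : ∑ l ∈ Finset.Icc 1 (k - r - 1),
        (2 : ℚ) ^ (l - 1) * (if l + 1 ≤ m then 1 else 0)
        = ∑ l ∈ Finset.Icc 1 (m - 1), (2:ℚ) ^ (l - 1) := by
      simp only [mul_ite, mul_one, mul_zero]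
      rw [← Finset.sum_filter]
      congr 1
      ext l
      simp only [Finset.mem_filter, Finset.mem_Icc]
      omega
    rw [hfilt, geom2]
    ring
  · intro heq
    rw [hAval]
    have hall : ∑ l ∈ Finset.Icc 1 (k - r - 1),
        (2 : ℚ) ^ (l - 1) * (if l + 1 ≤ m then 1 else 0)
        = ∑ l ∈ Finset.Icc 1 (k - r - 1), (2:ℚ) ^ (l - 1) := by
      refine Finset.sum_congr rfl fun l hl => ?_
      rw [Finset.mem_Icc] at hl
      rw [if_pos (by omega), mul_one]
    rw [hall, geom2]
    ring
end
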